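/- If h ∈ ℂ, (e_m)_{m ∈ ℤ} in ℂ, and γ ∈ ℤ satisfy −2n·e_{m+n} = h + (m−n−γ)·e_n for all m, n ∈ ℤ, then h = 0 and e_m = 0 for all m ∈ ℤ. -/

import Mathlib

/-!
Specialising to `n = 0, m = γ` gives `h = 0`; then `m = n + γ` gives `e (2n + γ) = 0` for every
`n ≠ 0`. Once `e` vanishes at a single nonzero index `n`, the equation at `(k - n, n)` reads
`-2n · e k = 0`, so `e` vanishes everywhere.
-/

variable {R : Type*} [Ring R]

def HalfDerivationEq (h : R) (e : ℤ → R) (γ : ℤ) : Prop :=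
  ∀ m n : ℤ, -2 * (n : R) * e (m + n) = h + ((m - n - γ : ℤ) : R) * e n

variable {h : R} {e : ℤ → R} {γ : ℤ}

namespace HalfDerivationEq

theorem const_eq_zero (H : HalfDerivationEq h e γ) : h = 0 := by
  simpa using (H γ 0).symm

variable [NoZeroDivisors R] [CharZero R]

theorem apply_two_mul_add_eq_zero (H : HalfDerivationEq h e γ) {n : ℤ} (hn : n ≠ 0) :
    e (2 * n + γ) = 0 := by
  have key := H (n + γ) n
  rw [H.const_eq_zero, show n + γ - n - γ = 0 by ring, show n + γ + n = 2 * n + γ by ring] at key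
  simpa [hn] using key

theorem eq_zero_of_apply_eq_zero (H : HalfDerivationEq h e γ) {n : ℤ} (hn : n ≠ 0)
    (hen : e n = 0) (k : ℤ) : e k = 0 := by
  have key := H (k - n) n
  rw [H.const_eq_zero, hen, sub_add_cancel] at key
  simpa [hn] using key

theorem eq_zero (H : HalfDerivationEq h e γ) (k : ℤ) : e k = 0 :=
  have hn : 2 * (|γ| + 1) + γ ≠ 0 := by cases abs_cases γ <;> omega
  H.eq_zero_of_apply_eq_zero hn (H.apply_two_mul_add_eq_zero (by positivity)) k

end HalfDerivationEq

theorem half_derivation_coeff_he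
    (h : ℂ) (e : ℤ → ℂ) (γ : ℤ)
    (heq : ∀ m n : ℤ, -2 * (n : ℂ) * e (m + n)
        = h + ((m - n - γ : ℤ) : ℂ) * e n) :
    h = 0 ∧ ∀ m : ℤ, e m = 0 :=
  ⟨HalfDerivationEq.const_eq_zero heq, HalfDerivationEq.eq_zero heq⟩
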